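/- Let α > 0 and C > 0, let r : (0,∞) → ℝ be continuous with 0 < r(z) ≤ C(1+z) for all z > 0, let a : (0,∞) → [0,∞) be locally integrable, let λ ≥ αC, and let f : (0,∞) → ℝ be measurable with ∫₀^∞ |f(x)|(1+x)^α dx ≤ 1. Then for every M > 0 and every c > 0, ∫_M^∞ |(R_λ f)(y)| (1+y)^α dy ≤ ∫_M^∞ 1_{{a < c}}(y) (1/r(y)) dy + 1/c, where 1_{{a<c}} is the indicator function of the sublevel set {y > 0 : a(y) < c}. -/

import Mathlib

/-!
Write `b = a / r`. Since `λ / r ≥ α / (1 + τ)`, the factor `exp (-∫ₓʸ λ / r)` absorbs the growth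
`((1 + y) / (1 + x)) ^ α` of the weight, so `|R_λ f y| (1 + y) ^ α ≤ T y / r y` with
`T y = ∫₀ʸ exp (-∫ₓʸ b) |f x| (1 + x) ^ α dx ≤ 1`. Where `a < c` this is the first term of the
bound. Where `a ≥ c` we have `1 / r ≤ b / c`, and by Tonelli `∫ b T ≤ ∫ |f| (1 + x) ^ α ≤ 1`,
because `∫ₓ^∞ b y exp (-∫ₓʸ b) dy = 1 - exp (-∫ₓ^∞ b) ≤ 1`.
-/

open MeasureTheory Set

theorem setLIntegral_Ioc_mul_exp_neg_integral_le_one {b : ℝ → ℝ} {x y : ℝ} (hxy : x ≤ y)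
    (hb : IntervalIntegrable b volume x y) (hb0 : ∀ τ ∈ Icc x y, 0 ≤ b τ) :
    ∫⁻ t in Ioc x y, ENNReal.ofReal (b t * Real.exp (-∫ τ in x..t, b τ)) ≤ 1 := by
  set G : ℝ → ℝ := fun t => -Real.exp (-∫ τ in x..t, b τ)
  have hG : MonotoneOn G (uIcc x y) := by
    rw [uIcc_of_le hxy]
    intro s hs t ht hst
    have hxs : IntervalIntegrable b volume x s :=
      hb.mono_set (uIcc_subset_uIcc_left (by rw [uIcc_of_le hxy]; exact hs))
    have hxt : IntervalIntegrable b volume x t :=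
      hb.mono_set (uIcc_subset_uIcc_left (by rw [uIcc_of_le hxy]; exact ht))
    have hbst : 0 ≤ ∫ τ in s..t, b τ :=
      intervalIntegral.integral_nonneg hst fun τ hτ => hb0 τ ⟨hs.1.trans hτ.1, hτ.2.trans ht.2⟩
    simp only [G, neg_le_neg_iff, Real.exp_le_exp]
    linarith [intervalIntegral.integral_interval_sub_left hxt hxs]
  have hG' : (fun t => b t * Real.exp (-∫ τ in x..t, b τ)) =ᵐ[volume.restrict (Ioc x y)]
      deriv G := by
    rw [Filter.EventuallyEq, ae_restrict_iff' measurableSet_Ioc]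
    filter_upwards [hb.ae_hasDerivAt_integral] with t ht htI
    have hB := ht (uIoc_subset_uIcc (by rwa [uIoc_of_le hxy])) x left_mem_uIcc
    have hGt : HasDerivAt G (b t * Real.exp (-∫ τ in x..t, b τ)) t :=
      hB.fun_neg.exp.fun_neg.congr_deriv (by ring)
    exact hGt.deriv.symm
  have hG'_int : IntegrableOn (deriv G) (Ioc x y) :=
    (intervalIntegrable_iff_integrableOn_Ioc_of_le hxy).1 hG.intervalIntegrable_deriv
  have hG'_nonneg : 0 ≤ᵐ[volume.restrict (Ioc x y)] deriv G := by
    filter_upwards [hG', ae_restrict_mem measurableSet_Ioc] with t ht htI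
    rw [← ht]
    exact mul_nonneg (hb0 t (Ioc_subset_Icc_self htI)) (Real.exp_pos _).le
  have hG_le : G y - G x ≤ 1 := by
    simp only [G, intervalIntegral.integral_same, neg_zero, Real.exp_zero]
    linarith [Real.exp_pos (-∫ τ in x..y, b τ)]
  calc ∫⁻ t in Ioc x y, ENNReal.ofReal (b t * Real.exp (-∫ τ in x..t, b τ))
      = ∫⁻ t in Ioc x y, ENNReal.ofReal (deriv G t) :=
        lintegral_congr_ae (hG'.fun_comp ENNReal.ofReal :)
    _ = ENNReal.ofReal (∫ t in x..y, deriv G t) := by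
        rw [← ofReal_integral_eq_lintegral_ofReal hG'_int hG'_nonneg,
          intervalIntegral.integral_of_le hxy]
    _ ≤ ENNReal.ofReal 1 := ENNReal.ofReal_le_ofReal
        (hG.intervalIntegral_deriv_mem_uIcc.2.trans (max_le zero_le_one hG_le))
    _ = 1 := ENNReal.ofReal_one

theorem setLIntegral_Ioi_mul_exp_neg_integral_le_one {b : ℝ → ℝ} {x : ℝ}
    (hb : LocallyIntegrableOn b (Ici x)) (hb0 : ∀ τ ∈ Ici x, 0 ≤ b τ) :
    ∫⁻ t in Ioi x, ENNReal.ofReal (b t * Real.exp (-∫ τ in x..t, b τ)) ≤ 1 := by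
  have hIoi : ⋃ n : ℕ, Ioc x (x + n) = Ioi x :=
    iUnion_Ioc_eq_Ioi_self_iff.2 fun t _ => ⟨⌈t - x⌉₊, by linarith [Nat.le_ceil (t - x)]⟩
  have hmono : Monotone fun n : ℕ => Ioc x (x + n) := fun m n hmn =>
    Ioc_subset_Ioc_right (by gcongr)
  rw [← hIoi, setLIntegral_iUnion_of_directed _ hmono.directed_le]
  refine iSup_le fun n => setLIntegral_Ioc_mul_exp_neg_integral_le_one (by simp) ?_
    fun τ hτ => hb0 τ hτ.1
  exact (intervalIntegrable_iff_integrableOn_Icc_of_le (by simp)).2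
    (hb.integrableOn_compact_subset Icc_subset_Ici_self isCompact_Icc)

theorem MeasureTheory.LocallyIntegrableOn.continuousOn_intervalIntegral {b : ℝ → ℝ} {t₀ : ℝ}
    (hb : LocallyIntegrableOn b (Ioi t₀)) :
    ContinuousOn (fun p : ℝ × ℝ => ∫ τ in p.1..p.2, b τ) (Ioi t₀ ×ˢ Ioi t₀) := by
  rintro ⟨x, y⟩ ⟨hx, hy⟩
  obtain ⟨m, hm, hmxy⟩ := exists_between (lt_min (show t₀ < x from hx) (show t₀ < y from hy))
  set M := max x y + 1
  have hmM : m ≤ M := by linarith [(min_le_max : min x y ≤ max x y)]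
  have hbm : IntegrableOn b (uIcc m M) :=
    hb.integrableOn_compact_subset (fun τ hτ => hm.trans_le (by
      rw [uIcc_of_le hmM] at hτ; exact hτ.1)) isCompact_uIcc
  have hsub : Ioo m M ⊆ uIcc m M := by rw [uIcc_of_le hmM]; exact Ioo_subset_Icc_self
  have hU : Ioo m M ×ˢ Ioo m M ∈ nhds (x, y) :=
    prod_mem_nhds (Ioo_mem_nhds (hmxy.trans_le (min_le_left x y)) (by linarith [le_max_left x y]))
      (Ioo_mem_nhds (hmxy.trans_le (min_le_right x y)) (by linarith [le_max_right x y]))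
  have hF := intervalIntegral.continuousOn_primitive_interval hbm
  have hdiff : ContinuousOn (fun p : ℝ × ℝ => (∫ τ in m..p.2, b τ) - ∫ τ in m..p.1, b τ)
      (Ioo m M ×ˢ Ioo m M) :=
    (hF.comp continuousOn_snd fun p hp => hsub hp.2).sub
      (hF.comp continuousOn_fst fun p hp => hsub hp.1)
  refine ((hdiff.continuousAt hU).congr ?_).continuousWithinAt
  filter_upwards [hU] with p hp
  exact intervalIntegral.integral_interval_sub_left
    (hbm.mono_set (uIcc_subset_uIcc left_mem_uIcc (hsub hp.2))).intervalIntegrable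
    (hbm.mono_set (uIcc_subset_uIcc left_mem_uIcc (hsub hp.1))).intervalIntegrable

theorem MeasureTheory.LocallyIntegrableOn.aemeasurable_ofReal_exp_neg_intervalIntegral
    {b : ℝ → ℝ} {t₀ : ℝ} (hb : LocallyIntegrableOn b (Ioi t₀)) :
    AEMeasurable (fun p : ℝ × ℝ => ENNReal.ofReal (Real.exp (-∫ τ in p.1..p.2, b τ)))
      ((volume.restrict (Ioi t₀)).prod (volume.restrict (Ioi t₀))) := by
  rw [Measure.prod_restrict, ← Measure.volume_eq_prod]
  exact (hb.continuousOn_intervalIntegral.neg.rexp.aemeasurable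
    (measurableSet_Ioi.prod measurableSet_Ioi)).ennreal_ofReal

theorem setLIntegral_mul_setLIntegral_exp_neg_integral_le {b : ℝ → ℝ} {t₀ : ℝ}
    (hb : LocallyIntegrableOn b (Ioi t₀)) (hb0 : ∀ τ ∈ Ioi t₀, 0 ≤ b τ) {g : ℝ → ENNReal}
    (hg : AEMeasurable g (volume.restrict (Ioi t₀))) :
    ∫⁻ y in Ioi t₀, ENNReal.ofReal (b y) *
        ∫⁻ x in Ioo t₀ y, ENNReal.ofReal (Real.exp (-∫ τ in x..y, b τ)) * g x
      ≤ ∫⁻ x in Ioi t₀, g x := by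
  set μ := volume.restrict (Ioi t₀)
  set H : ℝ → ℝ → ENNReal := fun x y => {p : ℝ × ℝ | p.1 < p.2}.indicator
    (fun p => ENNReal.ofReal (b p.2) * ENNReal.ofReal (Real.exp (-∫ τ in p.1..p.2, b τ)) * g p.1)
    (x, y)
  have hH : AEMeasurable (Function.uncurry H) (μ.prod μ) :=
    (((hb.aestronglyMeasurable.aemeasurable.ennreal_ofReal.comp_snd).mul
      hb.aemeasurable_ofReal_exp_neg_intervalIntegral).mul hg.comp_fst).indicator
      (measurableSet_lt measurable_fst measurable_snd)
  have hinner : ∀ y, ENNReal.ofReal (b y) *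
      ∫⁻ x in Ioo t₀ y, ENNReal.ofReal (Real.exp (-∫ τ in x..y, b τ)) * g x = ∫⁻ x, H x y ∂μ := by
    intro y
    rw [← Iio_inter_Ioi, ← Measure.restrict_restrict measurableSet_Iio,
      ← lintegral_indicator measurableSet_Iio, ← lintegral_const_mul' _ _ ENNReal.ofReal_ne_top]
    refine lintegral_congr fun x => ?_
    by_cases hxy : x < y <;> simp [H, hxy, mul_assoc]
  have houter : ∀ x ∈ Ioi t₀, ∫⁻ y, H x y ∂μ ≤ g x := by
    intro x hx
    have hH_x : ∀ y, H x y = (Ioi x).indicator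
        (fun y => ENNReal.ofReal (b y * Real.exp (-∫ τ in x..y, b τ)) * g x) y := by
      intro y
      rcases lt_or_ge x y with hxy | hyx
      · simp [H, hxy, ENNReal.ofReal_mul (hb0 y (lt_trans hx hxy))]
      · simp [H, hyx.not_gt]
    rcases eq_or_ne (g x) ⊤ with hgx | hgx
    · exact hgx ▸ le_top
    calc ∫⁻ y, H x y ∂μ
        ≤ ∫⁻ y, H x y := setLIntegral_le_lintegral _ _
      _ = (∫⁻ y in Ioi x, ENNReal.ofReal (b y * Real.exp (-∫ τ in x..y, b τ))) * g x := by
        simp_rw [hH_x]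
        rw [lintegral_indicator measurableSet_Ioi, lintegral_mul_const' _ _ hgx]
      _ ≤ 1 * g x := by
        gcongr
        exact setLIntegral_Ioi_mul_exp_neg_integral_le_one
          (hb.mono_set (Ici_subset_Ioi.2 hx)) fun τ hτ => hb0 τ (Ici_subset_Ioi.2 hx hτ)
      _ = g x := one_mul _
  calc _ = ∫⁻ y, ∫⁻ x, H x y ∂μ ∂μ := lintegral_congr hinner
    _ = ∫⁻ x, ∫⁻ y, H x y ∂μ ∂μ := (lintegral_lintegral_swap hH).symm
    _ ≤ ∫⁻ x, g x ∂μ := setLIntegral_mono' measurableSet_Ioi houter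

theorem setLIntegral_Ioo_exp_neg_integral_mul_le {b : ℝ → ℝ} {t₀ y : ℝ}
    (hb0 : ∀ τ ∈ Ioi t₀, 0 ≤ b τ) (g : ℝ → ENNReal) :
    ∫⁻ x in Ioo t₀ y, ENNReal.ofReal (Real.exp (-∫ τ in x..y, b τ)) * g x ≤ ∫⁻ x in Ioi t₀, g x :=
  calc ∫⁻ x in Ioo t₀ y, ENNReal.ofReal (Real.exp (-∫ τ in x..y, b τ)) * g x
      ≤ ∫⁻ x in Ioo t₀ y, g x := by
        refine setLIntegral_mono' measurableSet_Ioo fun x hx => mul_le_of_le_one_left' ?_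
        refine ENNReal.ofReal_le_one.2 (Real.exp_le_one_iff.2 (neg_nonpos.2 ?_))
        exact intervalIntegral.integral_nonneg hx.2.le fun τ hτ => hb0 τ (hx.1.trans_le hτ.1)
    _ ≤ ∫⁻ x in Ioi t₀, g x := lintegral_mono_set Ioo_subset_Ioi_self

theorem rpow_mul_exp_neg_integral_le {ℓ : ℝ → ℝ} {α x y : ℝ} (hx : -1 < x) (hxy : x ≤ y)
    (hℓ : IntervalIntegrable ℓ volume x y) (hℓα : ∀ τ ∈ Icc x y, α / (1 + τ) ≤ ℓ τ) :
    (1 + y) ^ α * Real.exp (-∫ τ in x..y, ℓ τ) ≤ (1 + x) ^ α := by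
  have hx1 : 0 < 1 + x := by linarith
  have hy1 : 0 < 1 + y := by linarith
  have hlog : ∫ τ in x..y, α / (1 + τ) = α * (Real.log (1 + y) - Real.log (1 + x)) := by
    simp_rw [div_eq_mul_one_div α]
    rw [intervalIntegral.integral_const_mul,
      intervalIntegral.integral_comp_add_left (fun τ => 1 / τ),
      integral_one_div_of_pos hx1 hy1, Real.log_div hy1.ne' hx1.ne']
  have hcomp : α * (Real.log (1 + y) - Real.log (1 + x)) ≤ ∫ τ in x..y, ℓ τ := by
    rw [← hlog]
    refine intervalIntegral.integral_mono_on hxy ?_ hℓ hℓα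
    exact (continuousOn_const.div (by fun_prop) fun τ hτ => by linarith [hτ.1]
      ).intervalIntegrable_of_Icc hxy
  rw [Real.rpow_def_of_pos hy1, Real.rpow_def_of_pos hx1, ← Real.exp_add, Real.exp_le_exp]
  linarith

theorem ofReal_abs_mul_integral_mul_le {X : Type*} [MeasurableSpace X] {μ : Measure X}
    {K Ψ f v : X → ℝ} {ρ c : ℝ} (hρ : 0 ≤ ρ) (hΨ : ∀ᵐ x ∂μ, 0 ≤ Ψ x)
    (hK : ∀ᵐ x ∂μ, |K x| * c ≤ Ψ x * v x) :
    ENNReal.ofReal (|ρ * ∫ x, K x * f x ∂μ| * c)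
      ≤ ENNReal.ofReal ρ * ∫⁻ x, ENNReal.ofReal (Ψ x) * ENNReal.ofReal (|f x| * v x) ∂μ := by
  rw [abs_mul, abs_of_nonneg hρ, mul_assoc, ENNReal.ofReal_mul hρ]
  gcongr
  calc ENNReal.ofReal (|∫ x, K x * f x ∂μ| * c)
      = ‖∫ x, K x * f x ∂μ‖ₑ * ENNReal.ofReal c := by
        rw [ENNReal.ofReal_mul (abs_nonneg _), Real.enorm_eq_ofReal_abs]
    _ ≤ (∫⁻ x, ‖K x * f x‖ₑ ∂μ) * ENNReal.ofReal c := by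
        gcongr; exact enorm_integral_le_lintegral_enorm _
    _ = ∫⁻ x, ENNReal.ofReal (|K x| * c * |f x|) ∂μ := by
        rw [← lintegral_mul_const' _ _ ENNReal.ofReal_ne_top]
        refine lintegral_congr fun x => ?_
        rw [Real.enorm_eq_ofReal_abs, ← ENNReal.ofReal_mul (abs_nonneg _), abs_mul]
        ring_nf
    _ ≤ ∫⁻ x, ENNReal.ofReal (Ψ x) * ENNReal.ofReal (|f x| * v x) ∂μ := by
        refine lintegral_mono_ae ?_
        filter_upwards [hΨ, hK] with x hΨx hKx
        rw [← ENNReal.ofReal_mul hΨx]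
        exact ENNReal.ofReal_le_ofReal (by nlinarith [abs_nonneg (f x)])

theorem ofReal_one_div_mul_le_indicator_add {a r : ℝ → ℝ} {c z : ℝ} {T : ENNReal}
    (hr : 0 < r z) (hc : 0 < c) (hT : T ≤ 1) :
    ENNReal.ofReal (1 / r z) * T
      ≤ ENNReal.ofReal ({u | a u < c}.indicator (fun u => 1 / r u) z)
        + ENNReal.ofReal (1 / c) * (ENNReal.ofReal (a z / r z) * T) := by
  by_cases hz : a z < c
  · rw [indicator_of_mem (show z ∈ {u | a u < c} from hz)]
    exact le_add_right (mul_le_of_le_one_right' hT)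
  · have hle : 1 / r z ≤ 1 / c * (a z / r z) := by
      rw [← mul_div_assoc, div_le_div_iff_of_pos_right hr, one_div_mul_eq_div, le_div_iff₀ hc]
      linarith [not_lt.1 hz]
    rw [← mul_assoc, ← ENNReal.ofReal_mul (by positivity)]
    exact le_add_left (by gcongr)

theorem ofReal_abs_resolvent_mul_rpow_le {α C lam : ℝ} {r a f R : ℝ → ℝ} (hα : 0 < α)
    (hC : 0 < C) (hr_cont : ContinuousOn r (Ioi 0)) (hr_pos : ∀ z > (0 : ℝ), 0 < r z)
    (hr_le : ∀ z > (0 : ℝ), r z ≤ C * (1 + z)) (hlam : α * C ≤ lam)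
    (hb : LocallyIntegrableOn (fun τ => a τ / r τ) (Ioi 0)) {y : ℝ} (hy : 0 < y)
    (hRy : R y = (1 / r y) * ∫ x in Ioo (0 : ℝ) y,
        Real.exp (-(∫ τ in x..y, (lam + a τ) / r τ)) * f x) :
    ENNReal.ofReal (|R y| * (1 + y) ^ α)
      ≤ ENNReal.ofReal (1 / r y) * ∫⁻ x in Ioo 0 y,
          ENNReal.ofReal (Real.exp (-∫ τ in x..y, a τ / r τ))
            * ENNReal.ofReal (|f x| * (1 + x) ^ α) := by
  have hℓα : ∀ τ > (0 : ℝ), α / (1 + τ) ≤ lam / r τ := fun τ hτ =>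
    calc α / (1 + τ) = α * C / (C * (1 + τ)) := by rw [mul_comm α C, mul_div_mul_left _ _ hC.ne']
      _ ≤ α * C / r τ := div_le_div_of_nonneg_left (by positivity) (hr_pos τ hτ) (hr_le τ hτ)
      _ ≤ lam / r τ := div_le_div_of_nonneg_right hlam (hr_pos τ hτ).le
  have hkernel : ∀ x ∈ Ioo 0 y, Real.exp (-∫ τ in x..y, (lam + a τ) / r τ) * (1 + y) ^ α
      ≤ Real.exp (-∫ τ in x..y, a τ / r τ) * (1 + x) ^ α := by
    rintro x ⟨hx, hxy⟩
    have hsub : Icc x y ⊆ Ioi 0 := fun τ hτ => hx.trans_le hτ.1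
    have hℓ : IntervalIntegrable (fun τ => lam / r τ) volume x y :=
      (continuousOn_const.div (hr_cont.mono hsub) fun τ hτ => (hr_pos τ (hsub hτ)).ne'
        ).intervalIntegrable_of_Icc hxy.le
    have hbxy : IntervalIntegrable (fun τ => a τ / r τ) volume x y :=
      (intervalIntegrable_iff_integrableOn_Icc_of_le hxy.le).2
        (hb.integrableOn_compact_subset hsub isCompact_Icc)
    simp_rw [add_div]
    rw [intervalIntegral.integral_add hℓ hbxy, neg_add, Real.exp_add]
    calc Real.exp (-∫ τ in x..y, lam / r τ) * Real.exp (-∫ τ in x..y, a τ / r τ) * (1 + y) ^ α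
        = Real.exp (-∫ τ in x..y, a τ / r τ)
          * ((1 + y) ^ α * Real.exp (-∫ τ in x..y, lam / r τ)) := by ring
      _ ≤ Real.exp (-∫ τ in x..y, a τ / r τ) * (1 + x) ^ α := by
        gcongr
        exact rpow_mul_exp_neg_integral_le (by linarith) hxy.le hℓ
          fun τ hτ => hℓα τ (hsub hτ)
  rw [hRy]
  refine ofReal_abs_mul_integral_mul_le (one_div_nonneg.2 (hr_pos y hy).le)
    (ae_of_all _ fun _ => (Real.exp_pos _).le) ?_
  filter_upwards [ae_restrict_mem measurableSet_Ioo] with x hx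
  rw [abs_of_pos (Real.exp_pos _)]
  exact hkernel x hx

theorem stmt11_general (α C : ℝ) (hα : 0 < α) (hC : 0 < C) (r : ℝ → ℝ)
    (hr_cont : ContinuousOn r (Ioi (0 : ℝ)))
    (hr_pos : ∀ z > (0 : ℝ), 0 < r z) (hr_le : ∀ z > (0 : ℝ), r z ≤ C * (1 + z))
    (a : ℝ → ℝ) (ha_meas : Measurable a) (ha_nonneg : ∀ z > (0 : ℝ), 0 ≤ a z)
    (ha_loc : LocallyIntegrableOn a (Ioi (0 : ℝ)))
    (lam : ℝ) (hlam : α * C ≤ lam)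
    (f : ℝ → ℝ)
    (hf_int : IntegrableOn (fun x => |f x| * (1 + x) ^ α) (Ioi (0 : ℝ)))
    (hf_ball : ∫ x in Ioi (0 : ℝ), |f x| * (1 + x) ^ α ≤ 1)
    (R : ℝ → ℝ)
    (hR : ∀ z > (0 : ℝ), R z = (1 / r z) * ∫ x in Ioo (0 : ℝ) z,
        Real.exp (-(∫ τ in x..z, (lam + a τ) / r τ)) * f x) :
    ∀ M > (0 : ℝ), ∀ c > (0 : ℝ),
      ∫⁻ z in Ioi M, ENNReal.ofReal (|R z| * (1 + z) ^ α)
        ≤ (∫⁻ z in Ioi M,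
              ENNReal.ofReal (Set.indicator {u : ℝ | a u < c} (fun u => 1 / r u) z))
          + ENNReal.ofReal (1 / c) := by
  intro M hM c hc
  set g : ℝ → ENNReal := fun x => ENNReal.ofReal (|f x| * (1 + x) ^ α)
  set T : ℝ → ENNReal := fun y =>
    ∫⁻ x in Ioo 0 y, ENNReal.ofReal (Real.exp (-∫ τ in x..y, a τ / r τ)) * g x
  have hr_inv : ContinuousOn (fun z => 1 / r z) (Ioi 0) :=
    continuousOn_const.div hr_cont fun z hz => (hr_pos z hz).ne'
  have hb : LocallyIntegrableOn (fun τ => a τ / r τ) (Ioi 0) := by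
    simpa only [mul_one_div] using ha_loc.mul_continuousOn hr_inv isOpen_Ioi.isLocallyClosed
  have hb0 : ∀ τ ∈ Ioi (0 : ℝ), 0 ≤ a τ / r τ := fun τ hτ =>
    div_nonneg (ha_nonneg τ hτ) (hr_pos τ hτ).le
  have hg : ∫⁻ x in Ioi 0, g x ≤ 1 := by
    rw [← ofReal_integral_eq_lintegral_ofReal hf_int (ae_restrict_of_forall_mem measurableSet_Ioi
      fun x (hx : 0 < x) => mul_nonneg (abs_nonneg _) (Real.rpow_nonneg (by linarith) _))]
    exact ENNReal.ofReal_le_one.2 hf_ball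
  have hT : ∀ y, T y ≤ 1 := fun y => (setLIntegral_Ioo_exp_neg_integral_mul_le hb0 g).trans hg
  calc ∫⁻ z in Ioi M, ENNReal.ofReal (|R z| * (1 + z) ^ α)
      ≤ ∫⁻ z in Ioi M, (ENNReal.ofReal ({u | a u < c}.indicator (fun u => 1 / r u) z)
          + ENNReal.ofReal (1 / c) * (ENNReal.ofReal (a z / r z) * T z)) := by
        refine setLIntegral_mono' measurableSet_Ioi fun z (hz : M < z) => ?_
        have hz0 : 0 < z := hM.trans hz
        exact (ofReal_abs_resolvent_mul_rpow_le hα hC hr_cont hr_pos hr_le hlam hb hz0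
          (hR z hz0)).trans (ofReal_one_div_mul_le_indicator_add (hr_pos z hz0) hc (hT z))
    _ = (∫⁻ z in Ioi M, ENNReal.ofReal ({u | a u < c}.indicator (fun u => 1 / r u) z))
          + ENNReal.ofReal (1 / c) * ∫⁻ z in Ioi M, ENNReal.ofReal (a z / r z) * T z := by
        rw [lintegral_add_left' (((hr_inv.mono (Ioi_subset_Ioi hM.le)).aemeasurable
          measurableSet_Ioi).indicator (measurableSet_lt ha_meas measurable_const)).ennreal_ofReal,
          lintegral_const_mul' _ _ ENNReal.ofReal_ne_top]
    _ ≤ (∫⁻ z in Ioi M, ENNReal.ofReal ({u | a u < c}.indicator (fun u => 1 / r u) z))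
          + ENNReal.ofReal (1 / c) * 1 := by
        gcongr
        exact (lintegral_mono_set (Ioi_subset_Ioi hM.le)).trans
          ((setLIntegral_mul_setLIntegral_exp_neg_integral_le hb hb0
            hf_int.aemeasurable.ennreal_ofReal).trans hg)
    _ = _ := by rw [mul_one]

/-- Uniform tail estimate on the unit ball of `X_{0,α} = L¹((0,∞),(1+x)^α dx)`:
if `0 < r(z) ≤ C(1+z)`, `λ ≥ αC` and `∫₀^∞ |f|(1+x)^α dx ≤ 1`, then for every `M > 0`
and `c > 0`,
`∫_M^∞ |(R_λ f)(y)|(1+y)^α dy ≤ ∫_M^∞ 1_{{a<c}}(y) (1/r(y)) dy + 1/c`, where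
`(R_λ f)(y) = (1/r(y)) ∫₀^y exp(−∫ₓ^y (λ+a(τ))/r(τ) dτ) f(x) dx`. -/
theorem stmt11 (α C : ℝ) (hα : 0 < α) (hC : 0 < C) (r : ℝ → ℝ)
    (hr_cont : ContinuousOn r (Ioi (0 : ℝ)))
    (hr_pos : ∀ z > (0 : ℝ), 0 < r z) (hr_le : ∀ z > (0 : ℝ), r z ≤ C * (1 + z))
    (a : ℝ → ℝ) (ha_meas : Measurable a) (ha_nonneg : ∀ z > (0 : ℝ), 0 ≤ a z)
    (ha_loc : LocallyIntegrableOn a (Ioi (0 : ℝ)))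
    (lam : ℝ) (hlam : α * C ≤ lam)
    (f : ℝ → ℝ) (hf_meas : Measurable f)
    (hf_int : IntegrableOn (fun x => |f x| * (1 + x) ^ α) (Ioi (0 : ℝ)))
    (hf_ball : ∫ x in Ioi (0 : ℝ), |f x| * (1 + x) ^ α ≤ 1)
    (R : ℝ → ℝ)
    (hR : ∀ z > (0 : ℝ), R z = (1 / r z) * ∫ x in Ioo (0 : ℝ) z,
        Real.exp (-(∫ τ in x..z, (lam + a τ) / r τ)) * f x) :
    ∀ M > (0 : ℝ), ∀ c > (0 : ℝ),
      ∫⁻ z in Ioi M, ENNReal.ofReal (|R z| * (1 + z) ^ α)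
        ≤ (∫⁻ z in Ioi M,
              ENNReal.ofReal (Set.indicator {u : ℝ | a u < c} (fun u => 1 / r u) z))
          + ENNReal.ofReal (1 / c) :=
  stmt11_general α C hα hC r hr_cont hr_pos hr_le a ha_meas ha_nonneg ha_loc lam hlam f hf_int
    hf_ball R hR
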